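/- Let E be the matrix E = [I_{J-1}; 0^T] − π̄·1_{J-1}^T with π_j > 0 summing to 1. Then E^T diag(π̄)^{-1} E is positive definite. -/

import Mathlib

open Matrix

namespace Matrix

variable {R m n : Type*} [CommRing R] [Fintype n] [DecidableEq m]

theorem mulVec_of_ite_sub (e : n → m) (π : m → R) (x : n → R) (j : m) :
    ((of fun j l => (if j = e l then 1 else 0) - π j) *ᵥ x) j =
      (∑ l, if j = e l then x l else 0) - π j * ∑ l, x l := by
  simp [mulVec, dotProduct, sub_mul, ite_mul, Finset.sum_sub_distrib, Finset.mul_sum]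

/-- Row `j₀` of the matrix is `-π j₀ • 1ᵀ`, so it forces `∑ x = 0` on the kernel; the remaining
rows then read `x l = π (e l) * ∑ x`. -/
theorem mulVec_injective_of_ite_sub [NoZeroDivisors R] {e : n → m} (he : e.Injective)
    {π : m → R} {j₀ : m} (hj₀ : j₀ ∉ Set.range e) (hπ : π j₀ ≠ 0) :
    Function.Injective (of fun j l => (if j = e l then (1 : R) else 0) - π j).mulVec := by
  rw [← coe_mulVecLin, injective_iff_map_eq_zero]
  intro x hx
  have hsum : ∑ l, x l = 0 := by
    have h := congrFun hx j₀
    have hne : ∀ l, j₀ ≠ e l := fun l h => hj₀ ⟨l, h.symm⟩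
    simp only [mulVecLin_apply, mulVec_of_ite_sub, hne, if_false, Finset.sum_const_zero,
      zero_sub, Pi.zero_apply, neg_eq_zero] at h
    exact (mul_eq_zero.1 h).resolve_left hπ
  funext l
  classical
  simpa [mulVec_of_ite_sub, hsum, he.eq_iff] using congrFun hx (e l)

end Matrix

theorem stmt4_general (J : ℕ) (hJ : 2 ≤ J)
    (πbar : Fin J → ℝ) (hpos : ∀ j, 0 < πbar j)
    (E : Matrix (Fin J) (Fin (J - 1)) ℝ)
    (hE : E = Matrix.of (fun (j : Fin J) (l : Fin (J - 1)) =>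
      (if j = Fin.castLE (Nat.sub_le J 1) l then (1 : ℝ) else 0) - πbar j)) :
    (Eᵀ * (Matrix.diagonal πbar)⁻¹ * E).PosDef := by
  have hlast : (⟨J - 1, by omega⟩ : Fin J) ∉ Set.range (Fin.castLE (Nat.sub_le J 1)) := by
    rintro ⟨l, hl⟩
    have := congrArg Fin.val hl
    simp only [Fin.val_castLE] at this
    omega
  have hinj : Function.Injective E.mulVec :=
    hE ▸ mulVec_injective_of_ite_sub (Fin.castLE_injective _) hlast (hpos _).ne'
  rw [← conjTranspose_eq_transpose_of_trivial]
  exact (posDef_diagonal_iff.2 hpos).inv.conjTranspose_mul_mul_same hinj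

/-- `Eᵀ diag(π̄)⁻¹ E` is positive definite. -/
theorem stmt4 (J : ℕ) (hJ : 2 ≤ J)
    (πbar : Fin J → ℝ) (hpos : ∀ j, 0 < πbar j) (hsum : ∑ j, πbar j = 1)
    (E : Matrix (Fin J) (Fin (J - 1)) ℝ)
    (hE : E = Matrix.of (fun (j : Fin J) (l : Fin (J - 1)) =>
      (if j = Fin.castLE (Nat.sub_le J 1) l then (1 : ℝ) else 0) - πbar j)) :
    (Eᵀ * (Matrix.diagonal πbar)⁻¹ * E).PosDef :=
  stmt4_general J hJ πbar hpos E hE
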